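/- Let r ≥ 1 and n ≥ 1, and let n_0, n_1, …, n_r be nonnegative integers with n_0 ≥ 1 and n_0 + n_1 + ⋯ + n_r = nr + 1. For each j with 1 ≤ j ≤ n_0, the number of paths p in 𝒫(n−1,r,r+1) with p_1 = +1 that have exactly n_i up steps in positions congruent to i modulo r+1 for each i = 0,…,r, and exactly j up steps in positions congruent to 0 modulo r+1 starting on or below the x-axis, equals (1/n_0)·C(n−1, n_0−1)·∏_{i=1}^{r} C(n, n_i); in particular this count is independent of j. -/

import Mathlib

/-!
Cycle-lemma argument. Cut a path into `n` blocks of length `r + 1`. Every step is `≡ 1` modulo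
`r + 1`, so at the start of block `k` the height is `(r + 1) S(k)`, and the total rise `r + 1` gives
`S(k + n) = S(k) + 1`. Rotating the path so that it starts at block `k` turns the height at block
`k'` into `(r + 1) (S(k + k') - S(k))`, and for `k' < n` we have `S(k + k') ≤ S(k)` iff
`W(k + k') ≤ W(k)` for the weight `W(k) = n S(k) - k`, which is `n`-periodic and injective on
`0, …, n - 1`. So the statistic of the rotated path is the rank of `k`, in the order given by `W`,
among the `m₀` blocks of `p` that begin with an up step.

Every path with the prescribed class counts therefore has exactly one block of rank `j`, so there
are `∏ C(n, mᵢ)` pairs (path, block of rank `j`); rotating identifies these pairs with pairs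
(path starting with an up step and with statistic `j`, block). Hence `n` times the count is
`∏ C(n, mᵢ)`, and `n C(n-1, m₀-1) = m₀ C(n, m₀)` gives the formula.
-/

open Finset

/-- The sum of the first `m` entries of a sequence `p` of length `N` (the height `s_m`). -/
def psum {N : ℕ} (p : Fin N → ℤ) (m : ℕ) : ℤ :=
  ∑ j ∈ Finset.univ.filter (fun j : Fin N => (j : ℕ) < m), p j

lemma le_iff_mul_sub_le_mul {a b : ℤ} {n d : ℕ} (hd : d < n) :
    b ≤ a ↔ n * b - d ≤ n * a := by
  constructor
  · intro h
    nlinarith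
  · intro h
    by_contra! h'
    nlinarith

lemma eq_of_mul_sub_eq_mul_sub {a b : ℤ} {n x y : ℕ} (hx : x < n) (hy : y < n)
    (h : n * a - x = n * b - y) : x = y := by
  rcases lt_trichotomy a b with hab | rfl | hab
  · nlinarith
  · omega
  · nlinarith

theorem Finset.existsUnique_card_filter_le_eq {α β : Type*} [LinearOrder β] {s : Finset α}
    {f : α → β} (hf : Set.InjOn f s) {j : ℕ} (hj₁ : 1 ≤ j) (hj₂ : j ≤ #s) :
    ∃! x, x ∈ s ∧ #{y ∈ s | f y ≤ f x} = j := by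
  set g : α → ℕ := fun x => #{y ∈ s | f y ≤ f x}
  have g_lt : ∀ x ∈ s, ∀ x' ∈ s, f x < f x' → g x < g x' := by
    intro x hx x' hx' hlt
    have hsub : {y ∈ s | f y ≤ f x} ⊆ {y ∈ s | f y ≤ f x'} := fun y hy => by
      simp only [mem_filter] at hy ⊢
      exact ⟨hy.1, hy.2.trans hlt.le⟩
    exact card_lt_card <| (ssubset_iff_of_subset hsub).2
      ⟨x', mem_filter.2 ⟨hx', le_rfl⟩, fun h => (mem_filter.1 h).2.not_gt hlt⟩
  have g_inj : ∀ x x', x ∈ s → x' ∈ s → g x = g x' → x = x' := by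
    intro x x' hx hx' h
    rcases lt_trichotomy (f x) (f x') with hlt | heq | hlt
    · exact absurd h (g_lt x hx x' hx' hlt).ne
    · exact hf hx hx' heq
    · exact absurd h (g_lt x' hx' x hx hlt).ne'
  have g_mem : ∀ x ∈ s, g x ∈ Icc 1 #s := fun x hx => mem_Icc.2
    ⟨card_pos.2 ⟨x, mem_filter.2 ⟨hx, le_rfl⟩⟩, card_le_card (filter_subset _ _)⟩
  obtain ⟨x, hx, hgx⟩ := surj_on_of_inj_on_of_card_le (fun x _ => g x) g_mem g_inj
    (by simp) j (mem_Icc.2 ⟨hj₁, hj₂⟩)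
  exact ⟨x, ⟨hx, hgx.symm⟩, fun x' ⟨hx', hgx'⟩ => g_inj x' x hx' hx (hgx'.trans hgx)⟩

theorem Nat.card_subtype_prod_eq_of_existsUnique {α β : Type*} {P : α → Prop}
    {Q : α → β → Prop} (h : ∀ a, P a → ∃! b, Q a b) :
    Nat.card {x : α × β // P x.1 ∧ Q x.1 x.2} = Nat.card {a // P a} := by
  refine Nat.card_congr (Equiv.ofBijective (fun x => ⟨x.1.1, x.2.1⟩) ⟨?_, ?_⟩)
  · intro x y hxy
    have ha : x.1.1 = y.1.1 := congrArg Subtype.val hxy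
    have hb : x.1.2 = y.1.2 := (h _ x.2.1).unique x.2.2 (ha ▸ y.2.2)
    exact Subtype.ext (Prod.ext ha hb)
  · rintro ⟨a, hPa⟩
    obtain ⟨b, hb, -⟩ := h a hPa
    exact ⟨⟨(a, b), hPa, hb⟩, rfl⟩

namespace GeneralizedNarayana

section Rotation

open Fin.NatCast

variable {N : ℕ} [NeZero N]

def rotate (t : Fin N) (p : Fin N → ℤ) : Fin N → ℤ := fun a => p (a + t)

@[simp]
lemma rotate_neg_rotate (t : Fin N) (p : Fin N → ℤ) : rotate (-t) (rotate t p) = p := by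
  ext a
  simp [rotate]

@[simp]
lemma rotate_rotate_neg (t : Fin N) (p : Fin N → ℤ) : rotate t (rotate (-t) p) = p := by
  ext a
  simp [rotate]

/-- The cast `(i : Fin N)` reduces `i` modulo `N`: this is the height of the periodic extension
of `p`. -/
def height (p : Fin N → ℤ) (x : ℕ) : ℤ := ∑ i ∈ range x, p (i : Fin N)

lemma psum_eq_height (p : Fin N → ℤ) {x : ℕ} (hx : x ≤ N) : psum p x = height p x := by
  refine sum_nbij' (fun a => a.val) (fun i => (i : Fin N)) ?_ ?_ ?_ ?_ ?_
  · simp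
  · intro i hi
    simp only [mem_range] at hi
    simp [Fin.val_natCast, Nat.mod_eq_of_lt (hi.trans_le hx), hi]
  · simp
  · intro i hi
    simp only [mem_range] at hi
    simp [Fin.val_natCast, Nat.mod_eq_of_lt (hi.trans_le hx)]
  · simp

lemma height_add (p : Fin N → ℤ) (t : Fin N) (y : ℕ) :
    height p (t + y) = height p t + height (rotate t p) y := by
  rw [height, height, height, sum_range_add]
  congr 1
  refine sum_congr rfl fun i _ => ?_
  rw [rotate, Nat.cast_add, Fin.cast_val_eq_self, add_comm]

lemma height_self_add (p : Fin N → ℤ) (x : ℕ) :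
    height p (N + x) = height p N + height p x := by
  simp [height, sum_range_add]

variable {r : ℕ} {p : Fin N → ℤ}

lemma dvd_height_sub (hp : ∀ a, p a = 1 ∨ p a = -(r : ℤ)) (x : ℕ) :
    (r + 1 : ℤ) ∣ height p x - x := by
  have : height p x - x = ∑ i ∈ range x, (p (i : Fin N) - 1) := by
    simp [height, sum_sub_distrib]
  rw [this]
  refine dvd_sum fun i _ => ?_
  rcases hp (i : Fin N) with h | h <;> rw [h]
  · simp
  · exact ⟨-1, by ring⟩

lemma height_self_eq (hp : ∀ a, p a = 1 ∨ p a = -(r : ℤ)) :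
    height p N = (r + 1) * #{a | p a = 1} - r * N := by
  have : ∀ a, p a = (r + 1) * (if p a = 1 then 1 else 0) - r := fun a => by
    rcases hp a with h | h <;> simp [h]
    omega
  have hsum : height p N = ∑ a, p a := by simp [height, ← Fin.sum_univ_eq_sum_range]
  rw [hsum, sum_congr rfl fun a _ => this a, sum_sub_distrib, ← mul_sum, sum_boole]
  simp [mul_comm]

end Rotation

section Blocks

variable {r n : ℕ}

def cell (k : Fin n) (i : Fin (r + 1)) : Fin (n * (r + 1)) := finProdFinEquiv (k, i)

@[simp]
lemma val_cell (k : Fin n) (i : Fin (r + 1)) : (cell k i : ℕ) = i + (r + 1) * k :=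
  finProdFinEquiv_apply_val _

@[simp]
lemma divNat_cell (k : Fin n) (i : Fin (r + 1)) : (cell k i).divNat = k := by
  have h := finProdFinEquiv.symm_apply_apply (k, i)
  rw [finProdFinEquiv_symm_apply] at h
  exact congrArg Prod.fst h

@[simp]
lemma modNat_cell (k : Fin n) (i : Fin (r + 1)) : (cell k i).modNat = i := by
  have h := finProdFinEquiv.symm_apply_apply (k, i)
  rw [finProdFinEquiv_symm_apply] at h
  exact congrArg Prod.snd h

lemma cell_divNat_modNat (a : Fin (n * (r + 1))) : cell a.divNat a.modNat = a := by
  rw [cell, ← finProdFinEquiv_symm_apply, Equiv.apply_symm_apply]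

lemma card_filter_and_mod_eq (P : Fin (n * (r + 1)) → Prop) [DecidablePred P] (i : Fin (r + 1)) :
    #{a | P a ∧ (a : ℕ) % (r + 1) = i} = #{k | P (cell k i)} := by
  have hcell : ∀ a : Fin (n * (r + 1)), (a : ℕ) % (r + 1) = i → cell a.divNat i = a := by
    intro a ha
    convert cell_divNat_modNat a
    ext
    simp [ha]
  refine card_nbij' Fin.divNat (cell · i) ?_ ?_ ?_ ?_
  · intro a ha
    simp only [mem_coe, mem_filter, mem_univ, true_and] at ha ⊢
    rw [hcell a ha.2]
    exact ha.1
  · intro k hk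
    simp only [mem_coe, mem_filter, mem_univ, true_and] at hk ⊢
    simp [hk, Nat.mod_eq_of_lt i.2]
  · intro a ha
    simp only [mem_coe, mem_filter, mem_univ, true_and] at ha
    exact hcell a ha.2
  · intro k _
    simp

def column (p : Fin (n * (r + 1)) → ℤ) (i : Fin (r + 1)) : Finset (Fin n) :=
  {k | p (cell k i) = 1}

def classCount (p : Fin (n * (r + 1)) → ℤ) (i : ℕ) : ℕ :=
  #{a | p a = 1 ∧ (a : ℕ) % (r + 1) = i}

lemma classCount_eq_card_column (p : Fin (n * (r + 1)) → ℤ) (i : Fin (r + 1)) :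
    classCount p i = #(column p i) :=
  card_filter_and_mod_eq _ i

variable [NeZero n]

lemma cell_add_cell_zero (k k' : Fin n) (i : Fin (r + 1)) :
    cell k' i + cell k 0 = cell (k' + k) i := by
  ext
  simp only [Fin.val_add, val_cell, Fin.val_zero, zero_add]
  have hlt : (i : ℕ) + (r + 1) * ((k' + k) % n) < n * (r + 1) := by
    have := Nat.mod_lt (k' + k : ℕ) (NeZero.pos n)
    nlinarith [i.2]
  calc (i + (r + 1) * k' + (r + 1) * k) % (n * (r + 1))
      = (i + (r + 1) * ((k' + k) % n) + n * (r + 1) * ((k' + k) / n)) % (n * (r + 1)) := by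
        rw [add_assoc, ← mul_add]
        conv_lhs => rw [← Nat.mod_add_div (k' + k : ℕ) n]
        ring_nf
    _ = i + (r + 1) * ((k' + k) % n) := by rw [Nat.add_mul_mod_self_left, Nat.mod_eq_of_lt hlt]

lemma rotate_cell (p : Fin (n * (r + 1)) → ℤ) (k k' : Fin n) (i : Fin (r + 1)) :
    rotate (cell k 0) p (cell k' i) = p (cell (k' + k) i) := by
  rw [rotate, cell_add_cell_zero]

lemma card_column_rotate (p : Fin (n * (r + 1)) → ℤ) (k : Fin n) (i : Fin (r + 1)) :
    #(column (rotate (cell k 0) p) i) = #(column p i) :=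
  card_equiv (Equiv.addRight k) fun k' => by simp [column, rotate_cell]

/-- The division is exact when every step is `1` or `-r` (`mul_blockHeight`). -/
def blockHeight (p : Fin (n * (r + 1)) → ℤ) (k : ℕ) : ℤ := height p ((r + 1) * k) / (r + 1)

def weight (p : Fin (n * (r + 1)) → ℤ) (k : ℕ) : ℤ := n * blockHeight p k - k

def rank (p : Fin (n * (r + 1)) → ℤ) (k : Fin n) : ℕ :=
  #((column p 0).filter fun k' : Fin n => weight p k' ≤ weight p k)

def stat (p : Fin (n * (r + 1)) → ℤ) : ℕ :=
  #{a | p a = 1 ∧ (a : ℕ) % (r + 1) = 0 ∧ psum p a ≤ 0}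

lemma weight_injective (p : Fin (n * (r + 1)) → ℤ) :
    Function.Injective fun k : Fin n => weight p k :=
  fun k k' h => Fin.ext (eq_of_mul_sub_eq_mul_sub k.2 k'.2 h)

variable {p : Fin (n * (r + 1)) → ℤ}

lemma mul_blockHeight (hp : ∀ a, p a = 1 ∨ p a = -(r : ℤ)) (k : ℕ) :
    (r + 1) * blockHeight p k = height p ((r + 1) * k) := by
  refine Int.mul_ediv_cancel' ((dvd_sub_left ?_).1 (dvd_height_sub hp _))
  push_cast
  exact dvd_mul_right _ _

lemma blockHeight_add_n (hp : ∀ a, p a = 1 ∨ p a = -(r : ℤ))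
    (htot : height p (n * (r + 1)) = r + 1) (k : ℕ) :
    blockHeight p (k + n) = blockHeight p k + 1 := by
  refine mul_left_cancel₀ (by positivity : (r + 1 : ℤ) ≠ 0) ?_
  have h := height_self_add p ((r + 1) * k)
  rw [htot, ← mul_blockHeight hp] at h
  rw [mul_blockHeight hp, show (r + 1) * (k + n) = n * (r + 1) + (r + 1) * k by ring, h]
  ring

lemma weight_periodic (hp : ∀ a, p a = 1 ∨ p a = -(r : ℤ))
    (htot : height p (n * (r + 1)) = r + 1) :
    Function.Periodic (weight p) n := fun k => by
  simp only [weight, blockHeight_add_n hp htot]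
  push_cast
  ring

lemma blockHeight_rotate (hp : ∀ a, p a = 1 ∨ p a = -(r : ℤ)) (k : Fin n) (k' : ℕ) :
    blockHeight (rotate (cell k 0) p) k' = blockHeight p (k + k') - blockHeight p k := by
  refine mul_left_cancel₀ (by positivity : (r + 1 : ℤ) ≠ 0) ?_
  have h := height_add p (cell k 0) ((r + 1) * k')
  rw [val_cell, Fin.val_zero, zero_add, ← mul_add] at h
  rw [mul_blockHeight (p := rotate (cell k 0) p) (fun a => hp _), mul_sub, mul_blockHeight hp,
    mul_blockHeight hp, h]
  ring

lemma stat_eq_card_column_filter (hp : ∀ a, p a = 1 ∨ p a = -(r : ℤ)) :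
    stat p = #((column p 0).filter fun k : Fin n => blockHeight p k ≤ 0) := by
  have hstat :
      stat p = #{a | (p a = 1 ∧ psum p a ≤ 0) ∧ (a : ℕ) % (r + 1) = (0 : Fin (r + 1))} := by
    simp only [stat, Fin.val_zero]
    exact congrArg card (filter_congr fun a _ => by tauto)
  rw [hstat, card_filter_and_mod_eq, column, filter_filter]
  refine congrArg card (filter_congr fun k _ => and_congr_right fun _ => ?_)
  rw [psum_eq_height p (cell k 0).is_lt.le, val_cell, Fin.val_zero, zero_add,
    ← mul_blockHeight hp]
  exact ⟨fun h => nonpos_of_mul_nonpos_right h (by positivity),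
    mul_nonpos_of_nonneg_of_nonpos (by positivity)⟩

lemma stat_rotate (hp : ∀ a, p a = 1 ∨ p a = -(r : ℤ)) (htot : height p (n * (r + 1)) = r + 1)
    (k : Fin n) :
    stat (rotate (cell k 0) p) = rank p k := by
  rw [stat_eq_card_column_filter (p := rotate (cell k 0) p) (fun a => hp _), rank]
  refine card_equiv (Equiv.addRight k) fun k' => ?_
  simp only [mem_filter, column, mem_univ, true_and, rotate_cell, Equiv.coe_addRight]
  refine and_congr_right fun _ => ?_
  rw [blockHeight_rotate hp, sub_nonpos, le_iff_mul_sub_le_mul k'.2, Fin.val_add,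
    (weight_periodic hp htot).map_mod_nat, add_comm (k' : ℕ), weight, weight]
  constructor <;> intro h <;> push_cast at h ⊢ <;> linarith

end Blocks

section Paths

variable {r n : ℕ}

def IsPath (m : Fin (r + 1) → ℕ) (p : Fin (n * (r + 1)) → ℤ) : Prop :=
  (∀ a, p a = 1 ∨ p a = -(r : ℤ)) ∧ ∀ i : Fin (r + 1), classCount p i = m i

def ofColumns (F : Fin (r + 1) → Finset (Fin n)) : Fin (n * (r + 1)) → ℤ :=
  fun a => if a.divNat ∈ F a.modNat then 1 else -(r : ℤ)

lemma column_ofColumns (F : Fin (r + 1) → Finset (Fin n)) (i : Fin (r + 1)) :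
    column (ofColumns F) i = F i := by
  ext k
  simp only [column, ofColumns, mem_filter, mem_univ, true_and, divNat_cell, modNat_cell]
  split_ifs with h <;> simp only [h, iff_false]
  omega

lemma ofColumns_column {p : Fin (n * (r + 1)) → ℤ} (hp : ∀ a, p a = 1 ∨ p a = -(r : ℤ)) :
    ofColumns (column p) = p := by
  ext a
  simp only [ofColumns, column, mem_filter, mem_univ, true_and, cell_divNat_modNat]
  rcases hp a with h | h <;> simp [h]
  omega

lemma card_isPath (m : Fin (r + 1) → ℕ) :
    Nat.card {p : Fin (n * (r + 1)) → ℤ // IsPath m p} = ∏ i, n.choose (m i) := by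
  let e : {p : Fin (n * (r + 1)) → ℤ // IsPath m p} ≃
      ∀ i, {s : Finset (Fin n) // #s = m i} :=
    { toFun := fun p i => ⟨column p.1 i, (classCount_eq_card_column _ i).symm.trans (p.2.2 i)⟩
      invFun := fun F => ⟨ofColumns fun i => F i,
        fun a => by unfold ofColumns; split_ifs <;> simp,
        fun i => by rw [classCount_eq_card_column, column_ofColumns, (F i).2]⟩
      left_inv := fun p => Subtype.ext (ofColumns_column p.2.1)
      right_inv := fun F => funext fun i => Subtype.ext (column_ofColumns (fun i => (F i).1) i) }
  rw [Nat.card_congr e, Nat.card_pi]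
  simp [Nat.card_eq_fintype_card, Fintype.card_finset_len]

lemma card_up_eq_sum_classCount (p : Fin (n * (r + 1)) → ℤ) :
    #{a | p a = 1} = ∑ i : Fin (r + 1), classCount p i := by
  rw [card_eq_sum_card_fiberwise (f := Fin.modNat) (t := univ) (fun a _ => mem_univ _)]
  refine sum_congr rfl fun i _ => ?_
  rw [classCount, filter_filter]
  simp [Fin.ext_iff, Fin.coe_modNat]

lemma IsPath.card_up {m : Fin (r + 1) → ℕ} {p : Fin (n * (r + 1)) → ℤ} (h : IsPath m p)
    (hsum : ∑ i, m i = n * r + 1) : #{a | p a = 1} = n * r + 1 := by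
  rw [card_up_eq_sum_classCount, ← hsum]
  exact sum_congr rfl fun i _ => h.2 i

variable [NeZero n] {m : Fin (r + 1) → ℕ} {p : Fin (n * (r + 1)) → ℤ}

lemma IsPath.height_eq (h : IsPath m p) (hsum : ∑ i, m i = n * r + 1) :
    height p (n * (r + 1)) = r + 1 := by
  rw [height_self_eq h.1, h.card_up hsum]
  push_cast
  ring

lemma isPath_rotate_iff (k : Fin n) : IsPath m (rotate (cell k 0) p) ↔ IsPath m p := by
  simp only [IsPath, classCount_eq_card_column, card_column_rotate]
  refine and_congr_left fun _ => ⟨fun h a => ?_, fun h a => h _⟩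
  have := h (a + -cell k 0)
  rwa [rotate, neg_add_cancel_right] at this

lemma existsUnique_rank (h : IsPath m p) {j : ℕ} (hj₁ : 1 ≤ j) (hj₂ : j ≤ m 0) :
    ∃! k, k ∈ column p 0 ∧ rank p k = j :=
  existsUnique_card_filter_le_eq (weight_injective p).injOn hj₁
    (by rwa [← classCount_eq_card_column, h.2 0])

def IsCounted (m : Fin (r + 1) → ℕ) (j : ℕ) (p : Fin (n * (r + 1)) → ℤ) : Prop :=
  IsPath m p ∧ p 0 = 1 ∧ stat p = j

lemma isCounted_rotate_iff (hsum : ∑ i, m i = n * r + 1) {j : ℕ} (k : Fin n) :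
    IsCounted m j (rotate (cell k 0) p) ↔ IsPath m p ∧ k ∈ column p 0 ∧ rank p k = j := by
  have hk : rotate (cell k 0) p 0 = 1 ↔ k ∈ column p 0 := by simp [rotate, column]
  rw [IsCounted, isPath_rotate_iff, hk]
  refine and_congr_right fun hp => and_congr_right fun _ => ?_
  rw [stat_rotate hp.1 (hp.height_eq hsum)]

lemma card_isCounted_mul (hsum : ∑ i, m i = n * r + 1) {j : ℕ} (hj₁ : 1 ≤ j)
    (hj₂ : j ≤ m 0) :
    Nat.card {p : Fin (n * (r + 1)) → ℤ // IsCounted m j p} * n = ∏ i, n.choose (m i) := by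
  let e : {p // IsCounted m j p} × Fin n ≃
      {x : (Fin (n * (r + 1)) → ℤ) × Fin n //
        IsPath m x.1 ∧ (x.2 ∈ column x.1 0 ∧ rank x.1 x.2 = j)} :=
    { toFun := fun y => ⟨(rotate (-cell y.2 0) y.1.1, y.2),
        (isCounted_rotate_iff hsum y.2).1 (by simpa using y.1.2)⟩
      invFun := fun x =>
        (⟨rotate (cell x.1.2 0) x.1.1, (isCounted_rotate_iff hsum x.1.2).2 x.2⟩, x.1.2)
      left_inv := fun y => by simp
      right_inv := fun x => by simp }
  calc _ = Nat.card ({p // IsCounted m j p} × Fin n) := by simp [Nat.card_prod]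
    _ = _ := Nat.card_congr e
    _ = _ := Nat.card_subtype_prod_eq_of_existsUnique (P := IsPath m)
        (Q := fun p k => k ∈ column p 0 ∧ rank p k = j)
        fun p hp => existsUnique_rank hp hj₁ hj₂
    _ = _ := card_isPath m

end Paths

end GeneralizedNarayana

open GeneralizedNarayana in
theorem generalized_narayana_congruence_general (r n : ℕ) (hn : 1 ≤ n)
    (m : Fin (r+1) → ℕ) (hsum : ∑ i, m i = n*r + 1)
    (j : ℕ) (hj1 : 1 ≤ j) (hj2 : j ≤ m 0) :
    Nat.card {p : Fin (n*(r+1)) → ℤ //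
      (∀ i, p i = 1 ∨ p i = -(r : ℤ)) ∧
      (univ.filter (fun i => p i = 1)).card = n*r + 1 ∧
      p ⟨0, Nat.mul_pos hn (Nat.succ_pos r)⟩ = 1 ∧
      (∀ i : Fin (r+1),
        (univ.filter (fun a : Fin (n*(r+1)) =>
          p a = 1 ∧ (a : ℕ) % (r+1) = (i : ℕ))).card = m i) ∧
      (univ.filter (fun a : Fin (n*(r+1)) =>
        p a = 1 ∧ (a : ℕ) % (r+1) = 0 ∧ psum p (a : ℕ) ≤ 0)).card = j }
      * (m 0) = Nat.choose (n-1) (m 0 - 1) *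
        ∏ i ∈ univ.filter (fun i : Fin (r+1) => i ≠ 0), Nat.choose n (m i) := by
  have : NeZero n := ⟨by omega⟩
  have hchoose : n * (n - 1).choose (m 0 - 1) = n.choose (m 0) * m 0 := by
    have h := Nat.add_one_mul_choose_eq (n - 1) (m 0 - 1)
    rwa [Nat.sub_add_cancel hn, Nat.sub_add_cancel (hj1.trans hj2)] at h
  have hcount := card_isCounted_mul hsum hj1 hj2
  rw [← mul_prod_erase _ _ (mem_univ 0), ← filter_ne'] at hcount
  rw [Nat.card_congr (Equiv.subtypeEquivRight (q := IsCounted m j) fun p =>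
    ⟨fun ⟨hp, _, h0, hm, hstat⟩ => ⟨⟨hp, hm⟩, h0, hstat⟩,
      fun ⟨hpath, h0, hstat⟩ => ⟨hpath.1, hpath.card_up hsum, h0, hpath.2, hstat⟩⟩)]
  refine Nat.eq_of_mul_eq_mul_left hn ?_
  calc _ = Nat.card {p // IsCounted m j p} * n * m 0 := by ring
    _ = _ := by rw [hcount, ← mul_assoc, mul_right_comm, ← hchoose, mul_assoc]

/-- Among paths in 𝒫(n−1,r,r+1) (length n(r+1), with nr+1 up steps and n−1 down
steps, each down step −r) starting with an up step and having exactly `m i` up steps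
in positions congruent to `i` modulo `r+1` for each `i = 0,…,r` (positions are
0-indexed), for each `1 ≤ j ≤ m 0` the number of such paths with exactly `j` up
steps in positions ≡ 0 (mod r+1) starting on or below the x-axis is
`(1/m₀)·C(n−1, m₀−1)·∏_{i=1}^{r} C(n, m i)`; in particular it is independent of `j`. -/
theorem generalized_narayana_congruence (r n : ℕ) (hr : 1 ≤ r) (hn : 1 ≤ n)
    (m : Fin (r+1) → ℕ) (hm0 : 1 ≤ m 0) (hsum : ∑ i, m i = n*r + 1)
    (j : ℕ) (hj1 : 1 ≤ j) (hj2 : j ≤ m 0) :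
    Nat.card {p : Fin (n*(r+1)) → ℤ //
      (∀ i, p i = 1 ∨ p i = -(r : ℤ)) ∧
      (univ.filter (fun i => p i = 1)).card = n*r + 1 ∧
      p ⟨0, Nat.mul_pos hn (Nat.succ_pos r)⟩ = 1 ∧
      (∀ i : Fin (r+1),
        (univ.filter (fun a : Fin (n*(r+1)) =>
          p a = 1 ∧ (a : ℕ) % (r+1) = (i : ℕ))).card = m i) ∧
      (univ.filter (fun a : Fin (n*(r+1)) =>
        p a = 1 ∧ (a : ℕ) % (r+1) = 0 ∧ psum p (a : ℕ) ≤ 0)).card = j }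
      * (m 0) = Nat.choose (n-1) (m 0 - 1) *
        ∏ i ∈ univ.filter (fun i : Fin (r+1) => i ≠ 0), Nat.choose n (m i) :=
  generalized_narayana_congruence_general r n hn m hsum j hj1 hj2
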